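/- Let p : E → B be a cocartesian fibration of categories classifying a functor F : B → Cat, and let f : E → X be a functor to a category X. Then the left Kan extension of f along p exists pointwise and is computed fiberwise: for b ∈ B, (Lan_p f)(b) ≅ colim( f restricted to the fiber E_b ), provided these fiberwise colimits exist in X. -/

import Mathlib

open CategoryTheory CategoryTheory.Limits

universe w v₁ v₂ u₁ u₂

section Aux

variable {B : Type u₁} [Category.{v₁} B] (F : B ⥤ Cat)

/-- The inclusion of the fiber `F.obj b` into the costructured arrow category over `b`. -/
@[simps]
def fiberToCostructuredArrow (b : B) :
    F.obj b ⥤ CostructuredArrow (Grothendieck.forget F) b where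
  obj x := CostructuredArrow.mk (Y := (Grothendieck.ι F b).obj x) (𝟙 b)
  map g := CostructuredArrow.homMk ((Grothendieck.ι F b).map g) (by exact Category.id_comp _)
  map_id x := by
    ext
    exact (Grothendieck.ι F b).map_id x
  map_comp g₁ g₂ := by
    ext
    exact (Grothendieck.ι F b).map_comp g₁ g₂

instance fiberToCostructuredArrow_final (b : B) : (fiberToCostructuredArrow F b).Final := by
  constructor
  intro c
  let x₀ : F.obj b := (F.map c.hom).toFunctor.obj c.left.fiber
  let g₀ : c ⟶ (fiberToCostructuredArrow F b).obj x₀ :=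
    CostructuredArrow.homMk (Grothendieck.Hom.mk c.hom (𝟙 _)) (by exact Category.comp_id _)
  let init : StructuredArrow c (fiberToCostructuredArrow F b) := StructuredArrow.mk g₀
  have hmor : ∀ Y : StructuredArrow c (fiberToCostructuredArrow F b), Nonempty (init ⟶ Y) := by
    intro Y
    have hbase : Y.hom.left.base = c.hom := by
      have := Y.hom.w
      have h2 : Y.hom.left.base ≫ 𝟙 b = c.hom ≫ 𝟙 b := this
      exact (Category.comp_id _).symm.trans (h2.trans (Category.comp_id _))
    refine ⟨StructuredArrow.homMk
      ((eqToHom (show x₀ = (F.map Y.hom.left.base).toFunctor.obj c.left.fiber by rw [hbase]; rfl) :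
        x₀ ⟶ _) ≫ Y.hom.left.fiber) ?_⟩
    ext
    apply Grothendieck.ext
    · dsimp [init, g₀, x₀, Grothendieck.ι, fiberToCostructuredArrow, CostructuredArrow.homMk, StructuredArrow.homMk]
      erw [CategoryTheory.Functor.map_id (F.map (𝟙 b)).toFunctor, Category.id_comp, eqToHom_trans_assoc, eqToHom_trans_assoc, eqToHom_trans_assoc, eqToHom_refl, Category.id_comp]
    · dsimp [init, g₀, x₀, Grothendieck.ι, fiberToCostructuredArrow, CostructuredArrow.homMk, StructuredArrow.homMk]
      exact (Category.comp_id _).trans hbase.symm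
  have : Nonempty (StructuredArrow c (fiberToCostructuredArrow F b)) := ⟨init⟩
  apply zigzag_isConnected
  intro Y₁ Y₂
  exact Zigzag.trans (Zigzag.of_zag (.inr (hmor Y₁))) (Zigzag.of_zag (.inl (hmor Y₂)))

end Aux

/-- let `p : E → B` be the cocartesian fibration (Grothendieck opfibration)
classified by a functor `F : B ⥤ Cat`, and let `f : E ⥤ X`. If the colimit of `f`
restricted to each fiber exists, then the pointwise left Kan extension of `f` along `p`
exists, and its value at `b` is the colimit of `f` restricted to the fiber `F(b)`. -/
theorem statement18 {B : Type u₁} [Category.{v₁} B] (F : B ⥤ Cat)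
    {X : Type u₂} [Category.{v₂} X] (f : Grothendieck F ⥤ X)
    [∀ b : B, HasColimit (Grothendieck.ι F b ⋙ f)] :
    ∃ h : (Grothendieck.forget F).HasPointwiseLeftKanExtension f,
      letI : (Grothendieck.forget F).HasPointwiseLeftKanExtension f := h
      ∀ b : B,
        Nonempty
          (((Grothendieck.forget F).pointwiseLeftKanExtension f).obj b ≅
            colimit (Grothendieck.ι F b ⋙ f)) := by
  have key : ∀ b : B, Grothendieck.ι F b ⋙ f =
      fiberToCostructuredArrow F b ⋙ CostructuredArrow.proj (Grothendieck.forget F) b ⋙ f :=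
    fun b => rfl
  have h : (Grothendieck.forget F).HasPointwiseLeftKanExtension f := by
    intro b
    have : HasColimit (fiberToCostructuredArrow F b ⋙
        CostructuredArrow.proj (Grothendieck.forget F) b ⋙ f) := by
      rw [← key b]; infer_instance
    exact Functor.Final.hasColimit_of_comp (fiberToCostructuredArrow F b)
  refine ⟨h, fun b => ?_⟩
  have : HasColimit (fiberToCostructuredArrow F b ⋙
      CostructuredArrow.proj (Grothendieck.forget F) b ⋙ f) := by
    rw [← key b]; infer_instance
  exact ⟨(Functor.Final.colimitIso (fiberToCostructuredArrow F b)
    (CostructuredArrow.proj (Grothendieck.forget F) b ⋙ f)).symm ≪≫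
    HasColimit.isoOfNatIso (eqToIso (key b).symm)⟩
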